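/- Let G = (V,E) be a finite simple graph, k_e ≥ 1 integers for e ∈ E, and G' the even subdivision of G. Then for every independent set 𝒮 of G there exists an independent set S of G' with S ∩ V = 𝒮 and |S| = |𝒮| + Σ_{e∈E} k_e. In particular, every maximum independent set of G is the restriction to V of some maximum independent set of G'. -/

import Mathlib

open scoped Classical

/-- The independence number `α(G)`: the maximum size of an independent set. -/
noncomputable def indepNum {V : Type*} [Fintype V] (G : SimpleGraph V) : ℕ :=
  Finset.sup
    (Finset.univ.filter fun S : Finset V => ∀ u ∈ S, ∀ v ∈ S, ¬ G.Adj u v)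
    Finset.card

/-- The even subdivision of `G`: every edge `e = {fst e, snd e}` is replaced by a
path `fst e — w^e_0 — w^e_1 — ⋯ — w^e_{2k_e - 1} — snd e` through `2 * k e` new
vertices (the new vertices for edge `e` being `Sum.inr ⟨e, i⟩` for `i : Fin (2 * k e)`);
in particular the original edge itself is removed. Here `fst, snd : G.edgeSet → V`
is any choice of orientation of the edges of `G`. -/
def evenSubdivision {V : Type*} (G : SimpleGraph V) (k : Sym2 V → ℕ)
    (fst snd : G.edgeSet → V) :
    SimpleGraph (V ⊕ Σ e : G.edgeSet, Fin (2 * k e)) :=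
  SimpleGraph.fromRel fun a b =>
    (∃ (e : G.edgeSet) (i : Fin (2 * k e)), (i : ℕ) = 0 ∧
        a = Sum.inl (fst e) ∧ b = Sum.inr ⟨e, i⟩)
    ∨ (∃ (e : G.edgeSet) (i j : Fin (2 * k e)), (j : ℕ) = (i : ℕ) + 1 ∧
        a = Sum.inr ⟨e, i⟩ ∧ b = Sum.inr ⟨e, j⟩)
    ∨ (∃ (e : G.edgeSet) (i : Fin (2 * k e)), (i : ℕ) = 2 * k e - 1 ∧
        a = Sum.inr ⟨e, i⟩ ∧ b = Sum.inl (snd e))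

/-!
On the path replacing an edge `e`, every other internal vertex gives `k e` independent vertices,
and starting next to whichever end of `e` is not in `𝒮` keeps them independent from `𝒮`.
Conversely, an independent set of `G'` has at most `k e` vertices on the path of `e`, and at most
`k e - 1` if it contains both ends of `e`; deleting one end of every such edge leaves an
independent set of `G`. Hence `α(G') = α(G) + ∑ k e`, and the extension of a maximum independent
set of `G` is maximum in `G'`.
-/

open Finset

section Adjacency

variable {V : Type*} {G : SimpleGraph V} {k : Sym2 V → ℕ} {fst snd : G.edgeSet → V}

lemma evenSubdivision_not_adj_inl_inl (u v : V) :
    ¬ (evenSubdivision G k fst snd).Adj (.inl u) (.inl v) := by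
  simp [evenSubdivision]

lemma evenSubdivision_adj_inl_inr {v : V} {x : Σ e : G.edgeSet, Fin (2 * k e)} :
    (evenSubdivision G k fst snd).Adj (.inl v) (.inr x) ↔
      (v = fst x.1 ∧ (x.2 : ℕ) = 0) ∨ (v = snd x.1 ∧ (x.2 : ℕ) = 2 * k x.1 - 1) := by
  rw [evenSubdivision, SimpleGraph.fromRel_adj]
  constructor
  · rintro ⟨-, (⟨e, i, hi, ha, hb⟩ | ⟨e, i, j, hij, ha, hb⟩ | ⟨e, i, hi, ha, hb⟩) |
      (⟨e, i, hi, ha, hb⟩ | ⟨e, i, j, hij, ha, hb⟩ | ⟨e, i, hi, ha, hb⟩)⟩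
      <;> cases ha <;> cases hb
    exacts [.inl ⟨rfl, hi⟩, .inr ⟨rfl, hi⟩]
  · rintro (⟨hv, hi⟩ | ⟨hv, hi⟩) <;> subst hv
    · exact ⟨Sum.inl_ne_inr, .inl (.inl ⟨x.1, x.2, hi, rfl, rfl⟩)⟩
    · exact ⟨Sum.inl_ne_inr, .inr (.inr (.inr ⟨x.1, x.2, hi, rfl, rfl⟩))⟩

lemma evenSubdivision_adj_inr_inr {x y : Σ e : G.edgeSet, Fin (2 * k e)} :
    (evenSubdivision G k fst snd).Adj (.inr x) (.inr y) ↔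
      x.1 = y.1 ∧ ((y.2 : ℕ) = x.2 + 1 ∨ (x.2 : ℕ) = y.2 + 1) := by
  rw [evenSubdivision, SimpleGraph.fromRel_adj]
  constructor
  · rintro ⟨-, (⟨e, i, hi, ha, hb⟩ | ⟨e, i, j, hij, ha, hb⟩ | ⟨e, i, hi, ha, hb⟩) |
      (⟨e, i, hi, ha, hb⟩ | ⟨e, i, j, hij, ha, hb⟩ | ⟨e, i, hi, ha, hb⟩)⟩
      <;> cases ha <;> cases hb
    exacts [⟨rfl, .inl hij⟩, ⟨rfl, .inr hij⟩]
  · obtain ⟨e, i⟩ := x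
    obtain ⟨e', j⟩ := y
    rintro ⟨he, hij | hij⟩ <;> dsimp only at he hij <;> subst he
    · refine ⟨fun h => ?_, .inl (.inr (.inl ⟨e, i, j, hij, rfl, rfl⟩))⟩
      simp only [Sum.inr.injEq, Sigma.mk.inj_iff, heq_eq_eq] at h
      omega
    · refine ⟨fun h => ?_, .inr (.inr (.inl ⟨e, j, i, hij, rfl, rfl⟩))⟩
      simp only [Sum.inr.injEq, Sigma.mk.inj_iff, heq_eq_eq] at h
      omega

end Adjacency

section Path

lemma card_filter_val_mod_two (n r : ℕ) (hr : r < 2) :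
    #{i : Fin (2 * n) | (i : ℕ) % 2 = r} = n := by
  have hcount := Nat.count_modEq_card (2 * n) two_pos r
  rw [Nat.count_eq_card_filter_range] at hcount
  have hmap : ({i : Fin (2 * n) | (i : ℕ) % 2 = r} : Finset _).map Fin.valEmbedding =
      {x ∈ range (2 * n) | x ≡ r [MOD 2]} := by
    ext x
    simp only [mem_map, mem_filter, mem_univ, true_and, Fin.valEmbedding_apply, mem_range,
      Nat.ModEq, Nat.mod_eq_of_lt hr]
    exact ⟨by rintro ⟨i, hi, rfl⟩; exact ⟨i.2, hi⟩, fun ⟨hx, hr⟩ => ⟨⟨x, hx⟩, hr, rfl⟩⟩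
  rw [← card_map, hmap, hcount]
  simp

variable {n : ℕ} {T : Finset (Fin (2 * n))}

lemma card_le_of_forall_ne_succ (hT : ∀ i ∈ T, ∀ j ∈ T, (j : ℕ) ≠ i + 1) : #T ≤ n := by
  simpa using card_le_card_of_injOn (t := range n) (fun i : Fin (2 * n) => (i : ℕ) / 2)
    (fun i _ => by simp only [coe_range, Set.mem_Iio]; omega)
    (fun i hi j hj hij => Fin.ext (by
      have := hT i hi j hj; have := hT j hj i hi
      simp only at hij; omega))

lemma card_lt_of_forall_ne_succ_of_ne_ends (hn : 0 < n)
    (hT : ∀ i ∈ T, ∀ j ∈ T, (j : ℕ) ≠ i + 1)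
    (hfirst : ∀ i ∈ T, (i : ℕ) ≠ 0) (hlast : ∀ i ∈ T, (i : ℕ) ≠ 2 * n - 1) : #T < n := by
  have := card_le_card_of_injOn (t := range (n - 1)) (fun i : Fin (2 * n) => ((i : ℕ) - 1) / 2)
    (fun i hi => by
      have := hfirst i hi; have := hlast i hi
      simp only [coe_range, Set.mem_Iio]; omega)
    (fun i hi j hj hij => Fin.ext (by
      have := hT i hi j hj; have := hT j hj i hi; have := hfirst i hi; have := hfirst j hj
      simp only at hij; omega))
  rw [card_range] at this
  omega

end Path

lemma card_le_indepNum {V : Type*} [Fintype V] {G : SimpleGraph V} {S : Finset V}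
    (hS : ∀ u ∈ S, ∀ v ∈ S, ¬ G.Adj u v) : #S ≤ indepNum G :=
  le_sup (f := card) (by simpa using hS)

lemma indepNum_le {V : Type*} [Fintype V] {G : SimpleGraph V} {m : ℕ}
    (h : ∀ S : Finset V, (∀ u ∈ S, ∀ v ∈ S, ¬ G.Adj u v) → #S ≤ m) : indepNum G ≤ m :=
  Finset.sup_le fun S hS => h S (by simpa using hS)

section Extension

variable {V : Type*} {G : SimpleGraph V} [Fintype G.edgeSet]

/-- Index `0` is next to `fst e` and the odd index `2 * k e - 1` next to `snd e`; since at most one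
end of `e` lies in an independent `𝒮`, the chosen parity avoids the neighbours of `𝒮`. -/
noncomputable def extendAlongPaths (k : Sym2 V → ℕ) (fst : G.edgeSet → V) (𝒮 : Finset V) :
    Finset (V ⊕ Σ e : G.edgeSet, Fin (2 * k e)) :=
  𝒮.disjSum (univ.sigma fun e => {i | (i : ℕ) % 2 = if fst e ∈ 𝒮 then 1 else 0})

variable {k : Sym2 V → ℕ} {fst snd : G.edgeSet → V} {𝒮 : Finset V}

@[simp]
lemma inl_mem_extendAlongPaths {v : V} : .inl v ∈ extendAlongPaths k fst 𝒮 ↔ v ∈ 𝒮 := by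
  simp [extendAlongPaths]

lemma inr_mem_extendAlongPaths {x : Σ e : G.edgeSet, Fin (2 * k e)} :
    .inr x ∈ extendAlongPaths k fst 𝒮 ↔ (x.2 : ℕ) % 2 = if fst x.1 ∈ 𝒮 then 1 else 0 := by
  simp [extendAlongPaths]

lemma card_extendAlongPaths : #(extendAlongPaths k fst 𝒮) = #𝒮 + ∑ e : G.edgeSet, k e := by
  rw [extendAlongPaths, card_disjSum, card_sigma]
  congr 1
  refine sum_congr rfl fun e _ => card_filter_val_mod_two _ _ ?_
  split_ifs <;> omega

lemma extendAlongPaths_indep (hadj : ∀ e : G.edgeSet, G.Adj (fst e) (snd e))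
    (h𝒮 : ∀ u ∈ 𝒮, ∀ v ∈ 𝒮, ¬ G.Adj u v) :
    ∀ a ∈ extendAlongPaths k fst 𝒮, ∀ b ∈ extendAlongPaths k fst 𝒮,
      ¬ (evenSubdivision G k fst snd).Adj a b := by
  have not_adj_inl_inr : ∀ u ∈ 𝒮, ∀ x, .inr x ∈ extendAlongPaths k fst 𝒮 →
      ¬ (evenSubdivision G k fst snd).Adj (.inl u) (.inr x) := by
    intro u hu x hx hux
    have hlt := x.2.isLt
    rw [inr_mem_extendAlongPaths] at hx
    rcases evenSubdivision_adj_inl_inr.mp hux with ⟨rfl, h0⟩ | ⟨rfl, hlast⟩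
    · simp [hu, h0] at hx
    · have hfst : fst x.1 ∉ 𝒮 := fun hfst => h𝒮 _ hfst _ hu (hadj x.1)
      simp only [hfst, if_false] at hx
      omega
  rintro (u | x) ha (v | y) hb hab
  · exact evenSubdivision_not_adj_inl_inl u v hab
  · exact not_adj_inl_inr u (inl_mem_extendAlongPaths.mp ha) y hb hab
  · exact not_adj_inl_inr v (inl_mem_extendAlongPaths.mp hb) x ha hab.symm
  · obtain ⟨e, i⟩ := x
    obtain ⟨e', j⟩ := y
    obtain ⟨he, hij⟩ := evenSubdivision_adj_inr_inr.mp hab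
    dsimp only at he hij
    subst he
    simp only [inr_mem_extendAlongPaths] at ha hb
    omega

lemma exists_evenSubdivision_indep_extension (hadj : ∀ e : G.edgeSet, G.Adj (fst e) (snd e))
    (h𝒮 : ∀ u ∈ 𝒮, ∀ v ∈ 𝒮, ¬ G.Adj u v) :
    ∃ S : Finset (V ⊕ Σ e : G.edgeSet, Fin (2 * k e)),
      (∀ a ∈ S, ∀ b ∈ S, ¬ (evenSubdivision G k fst snd).Adj a b) ∧
      (∀ x : V, Sum.inl x ∈ S ↔ x ∈ 𝒮) ∧ #S = #𝒮 + ∑ e : G.edgeSet, k e :=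
  ⟨extendAlongPaths k fst 𝒮, extendAlongPaths_indep hadj h𝒮, fun _ => inl_mem_extendAlongPaths,
    card_extendAlongPaths⟩

end Extension

section UpperBound

variable {V : Type*} {G : SimpleGraph V} {k : Sym2 V → ℕ} {fst snd : G.edgeSet → V}

noncomputable def pathPart (S : Finset (V ⊕ Σ e : G.edgeSet, Fin (2 * k e))) (e : G.edgeSet) :
    Finset (Fin (2 * k e)) :=
  S.toRight.preimage (Sigma.mk (β := fun e : G.edgeSet => Fin (2 * k e)) e)
    sigma_mk_injective.injOn

lemma mem_pathPart {S : Finset (V ⊕ Σ e : G.edgeSet, Fin (2 * k e))} {e : G.edgeSet}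
    {i : Fin (2 * k e)} : i ∈ pathPart S e ↔ .inr ⟨e, i⟩ ∈ S := by
  simp [pathPart]

lemma card_pathPart_add_le {S : Finset (V ⊕ Σ e : G.edgeSet, Fin (2 * k e))}
    (hS : ∀ a ∈ S, ∀ b ∈ S, ¬ (evenSubdivision G k fst snd).Adj a b)
    (e : G.edgeSet) (hk : 1 ≤ k e) :
    #(pathPart S e) + (if fst e ∈ S.toLeft ∧ snd e ∈ S.toLeft then 1 else 0) ≤ k e := by
  have hsucc : ∀ i ∈ pathPart S e, ∀ j ∈ pathPart S e, (j : ℕ) ≠ i + 1 := fun i hi j hj hij =>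
    hS _ (mem_pathPart.mp hi) _ (mem_pathPart.mp hj)
      (evenSubdivision_adj_inr_inr.mpr ⟨rfl, .inl hij⟩)
  split_ifs with hboth
  · refine card_lt_of_forall_ne_succ_of_ne_ends hk hsucc (fun i hi h0 => ?_) (fun i hi hlast => ?_)
    · exact hS _ (mem_toLeft.mp hboth.1) _ (mem_pathPart.mp hi)
        (evenSubdivision_adj_inl_inr.mpr (.inl ⟨rfl, h0⟩))
    · exact hS _ (mem_toLeft.mp hboth.2) _ (mem_pathPart.mp hi)
        (evenSubdivision_adj_inl_inr.mpr (.inr ⟨rfl, hlast⟩))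
  · exact card_le_of_forall_ne_succ hsucc

variable [Fintype G.edgeSet]

lemma card_eq_card_toLeft_add_sum_card_pathPart (S : Finset (V ⊕ Σ e : G.edgeSet, Fin (2 * k e))) :
    #S = #S.toLeft + ∑ e, #(pathPart S e) := by
  unfold pathPart
  rw [← card_toLeft_add_card_toRight, ← card_sigma, sigma_preimage_mk_of_subset _ (subset_univ _)]

variable [Fintype V]

/-- Removing `fst e` for every edge `e` inside `A` leaves an independent set. -/
lemma card_le_indepNum_add_card_edges_inside
    (hends : ∀ e : G.edgeSet, (e : Sym2 V) = s(fst e, snd e)) (A : Finset V) :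
    #A ≤ indepNum G + #{e : G.edgeSet | fst e ∈ A ∧ snd e ∈ A} := by
  set inside : Finset G.edgeSet := {e | fst e ∈ A ∧ snd e ∈ A}
  have hindep : ∀ u ∈ A \ inside.image fst, ∀ v ∈ A \ inside.image fst, ¬ G.Adj u v := by
    intro u hu v hv huv
    simp only [mem_sdiff, mem_image] at hu hv
    let e : G.edgeSet := ⟨s(u, v), huv⟩
    have he : s(u, v) = s(fst e, snd e) := hends e
    rcases Sym2.eq_iff.mp he with ⟨hu', hv'⟩ | ⟨hu', hv'⟩
    · exact hu.2 ⟨e, by simp [inside, ← hu', ← hv', hu.1, hv.1], hu'.symm⟩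
    · exact hv.2 ⟨e, by simp [inside, ← hu', ← hv', hu.1, hv.1], hv'.symm⟩
  calc #A ≤ #(A \ inside.image fst) + #(inside.image fst) := card_le_card_sdiff_add_card
    _ ≤ indepNum G + #inside := add_le_add (card_le_indepNum hindep) card_image_le

lemma indepNum_evenSubdivision_le (hk : ∀ e : G.edgeSet, 1 ≤ k e)
    (hends : ∀ e : G.edgeSet, (e : Sym2 V) = s(fst e, snd e)) :
    indepNum (evenSubdivision G k fst snd) ≤ indepNum G + ∑ e : G.edgeSet, k e := by
  refine indepNum_le fun S hS => ?_
  calc #S = #S.toLeft + ∑ e, #(pathPart S e) := card_eq_card_toLeft_add_sum_card_pathPart S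
    _ ≤ indepNum G + #{e : G.edgeSet | fst e ∈ S.toLeft ∧ snd e ∈ S.toLeft} +
          ∑ e, #(pathPart S e) :=
        add_le_add_left (card_le_indepNum_add_card_edges_inside hends _) _
    _ = indepNum G +
          ∑ e, (#(pathPart S e) + if fst e ∈ S.toLeft ∧ snd e ∈ S.toLeft then 1 else 0) := by
        rw [card_filter, sum_add_distrib]
        ring
    _ ≤ indepNum G + ∑ e : G.edgeSet, k e := by
        gcongr with e
        exact card_pathPart_add_le hS e (hk e)

end UpperBound

theorem indep_extends_to_evenSubdivision_general {V : Type*} [Fintype V]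
    (G : SimpleGraph V) [DecidableRel G.Adj]
    (k : Sym2 V → ℕ) (hk : ∀ e ∈ G.edgeSet, 1 ≤ k e)
    (fst snd : G.edgeSet → V)
    (hends : ∀ e : G.edgeSet, (e : Sym2 V) = s(fst e, snd e)) :
    (∀ 𝒮 : Finset V, (∀ u ∈ 𝒮, ∀ v ∈ 𝒮, ¬ G.Adj u v) →
      ∃ S : Finset (V ⊕ Σ e : G.edgeSet, Fin (2 * k e)),
        (∀ a ∈ S, ∀ b ∈ S, ¬ (evenSubdivision G k fst snd).Adj a b) ∧
        (∀ x : V, Sum.inl x ∈ S ↔ x ∈ 𝒮) ∧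
        S.card = 𝒮.card + ∑ e : G.edgeSet, k e) ∧
    (∀ 𝒮 : Finset V,
      (∀ u ∈ 𝒮, ∀ v ∈ 𝒮, ¬ G.Adj u v) → 𝒮.card = indepNum G →
      ∃ S : Finset (V ⊕ Σ e : G.edgeSet, Fin (2 * k e)),
        (∀ a ∈ S, ∀ b ∈ S, ¬ (evenSubdivision G k fst snd).Adj a b) ∧
        (∀ x : V, Sum.inl x ∈ S ↔ x ∈ 𝒮) ∧
        S.card = indepNum (evenSubdivision G k fst snd)) := by
  have hadj (e : G.edgeSet) : G.Adj (fst e) (snd e) := by simpa [hends e] using e.2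
  refine ⟨fun 𝒮 h𝒮 => exists_evenSubdivision_indep_extension hadj h𝒮, fun 𝒮 h𝒮 hmax => ?_⟩
  obtain ⟨S, hS, hS𝒮, hcard⟩ := exists_evenSubdivision_indep_extension (k := k) hadj h𝒮
  refine ⟨S, hS, hS𝒮, le_antisymm (card_le_indepNum hS) ?_⟩
  calc indepNum (evenSubdivision G k fst snd) ≤ indepNum G + ∑ e : G.edgeSet, k e :=
        indepNum_evenSubdivision_le (fun e => hk e e.2) hends
    _ = #S := by rw [hcard, hmax]

theorem indep_extends_to_evenSubdivision {V : Type*} [Fintype V] [DecidableEq V]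
    (G : SimpleGraph V) [DecidableRel G.Adj]
    (k : Sym2 V → ℕ) (hk : ∀ e ∈ G.edgeSet, 1 ≤ k e)
    (fst snd : G.edgeSet → V)
    (hends : ∀ e : G.edgeSet, (e : Sym2 V) = s(fst e, snd e)) :
    (∀ 𝒮 : Finset V, (∀ u ∈ 𝒮, ∀ v ∈ 𝒮, ¬ G.Adj u v) →
      ∃ S : Finset (V ⊕ Σ e : G.edgeSet, Fin (2 * k e)),
        (∀ a ∈ S, ∀ b ∈ S, ¬ (evenSubdivision G k fst snd).Adj a b) ∧
        (∀ x : V, Sum.inl x ∈ S ↔ x ∈ 𝒮) ∧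
        S.card = 𝒮.card + ∑ e : G.edgeSet, k e) ∧
    (∀ 𝒮 : Finset V,
      (∀ u ∈ 𝒮, ∀ v ∈ 𝒮, ¬ G.Adj u v) → 𝒮.card = indepNum G →
      ∃ S : Finset (V ⊕ Σ e : G.edgeSet, Fin (2 * k e)),
        (∀ a ∈ S, ∀ b ∈ S, ¬ (evenSubdivision G k fst snd).Adj a b) ∧
        (∀ x : V, Sum.inl x ∈ S ↔ x ∈ 𝒮) ∧
        S.card = indepNum (evenSubdivision G k fst snd)) :=
  indep_extends_to_evenSubdivision_general G k hk fst snd hends
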